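/- Let $(S_k)$ be a random walk with $S_0=0$, let $\tau=\min\{k\geq1: S_k<0\}$, and let $V(x)=\sum_{k=0}^\infty \mathbb{P}(H_k\leq x)$ be the renewal function of the strict ascending ladder heights $(H_k)$ of $-S$. Then for every $x\geq0$, $\liminf_{n\to\infty} \mathbb{P}_x(\tau>n)/\mathbb{P}_0(\tau>n) \geq V(x)$, where $\mathbb{P}_x$ denotes the law of the walk started at $x$. -/

import Mathlib

/-!
For `x ≥ 0` the event that the walk started at `x` stays nonnegative up to time `n` contains the
event `{τ > n}` and, for `t ≤ n` and `k ≥ 0`, the events "`t` is the `(k+1)`-st strict ascending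
ladder time of `-S`, with height at most `x`, and the walk does not drop below `S t` during the
next `n` steps". These are pairwise disjoint, because such a `t` is the last ladder time before
`t + n ≥ n`. By the Markov property at the fixed time `t`, the last event has probability
`P(T_{k+1} = t, H_{k+1} ≤ x) P(τ > n)`, so the ratio `P_x(τ > n) / P(τ > n)` is at least
`1 + ∑_{k, t ≤ n} P(T_{k+1} = t, H_{k+1} ≤ x)`, which tends to `V x`. Centering makes
`P(τ > n) > 0` and keeps the ratio bounded (a run of increments `≥ δ > 0` lifts the walk above
`x`), so the `liminf` is not a junk value.
-/

open MeasureTheory ProbabilityTheory Filter Set Topology ENNReal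

namespace ProbabilityTheory

variable {Ω β : Type*} [MeasurableSpace β] {X : ℕ → Ω → β}

abbrev past (X : ℕ → Ω → β) (t : ℕ) : MeasurableSpace Ω :=
  ⨆ i < t, MeasurableSpace.comap (X i) inferInstance

theorem measurable_past {t i : ℕ} (hi : i < t) : Measurable[past X t] (X i) :=
  Measurable.of_comap_le
    (le_iSup₂ (f := fun i (_ : i < t) => MeasurableSpace.comap (X i) _) i hi)

variable [MeasurableSpace Ω] {P : Measure Ω}

theorem past_le (hmeas : ∀ i, Measurable (X i)) (t : ℕ) :
    past X t ≤ ‹MeasurableSpace Ω› :=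
  iSup₂_le fun i _ => (hmeas i).comap_le

namespace iIndepFun

theorem map_shift_eq_map (hindep : iIndepFun X P) (hmeas : ∀ i, Measurable (X i))
    (hid : ∀ i, P.map (X i) = P.map (X 0)) (t : ℕ) :
    P.map (fun ω j => X (t + j) ω) = P.map (fun ω j => X j ω) := by
  rw [(hindep.precomp (add_right_injective t)).map_fun_eq_infinitePi_map (fun j => hmeas _),
    hindep.map_fun_eq_infinitePi_map hmeas]
  simp only [hid]

theorem indep_past_shift (hindep : iIndepFun X P) (hmeas : ∀ i, Measurable (X i)) (t : ℕ) :
    Indep (past X t) (MeasurableSpace.comap (fun ω j => X (t + j) ω) inferInstance) P := by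
  have hsplit := indep_iSup_of_disjoint (fun i => (hmeas i).comap_le) hindep.iIndep
    (S := {i | i < t}) (T := {i | t ≤ i})
    (Set.disjoint_left.2 fun i (hi : i < t) (hi' : t ≤ i) => not_lt.2 hi' hi)
  refine indep_of_indep_of_le_right hsplit (Measurable.comap_le ?_)
  exact @measurable_pi_lambda _ _ _ (_) _ _ fun j => Measurable.of_comap_le
    (le_iSup₂ (f := fun i (_ : i ∈ {i | t ≤ i}) => MeasurableSpace.comap (X i) _) (t + j)
      (Nat.le_add_right t j))

theorem measure_inter_shift_preimage [IsProbabilityMeasure P] (hindep : iIndepFun X P)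
    (hmeas : ∀ i, Measurable (X i)) (hid : ∀ i, P.map (X i) = P.map (X 0)) {t : ℕ}
    {E : Set Ω} (hE : MeasurableSet[past X t] E) {D : Set (ℕ → β)} (hD : MeasurableSet D) :
    P (E ∩ (fun ω j => X (t + j) ω) ⁻¹' D) = P E * P ((fun ω j => X j ω) ⁻¹' D) := by
  have hshift : Measurable fun ω j => X (t + j) ω := measurable_pi_lambda _ fun j => hmeas _
  rw [(Indep_iff _ _ _).1 (hindep.indep_past_shift hmeas t) _ _ hE ⟨D, hD, rfl⟩,
    ← Measure.map_apply hshift hD, hindep.map_shift_eq_map hmeas hid,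
    Measure.map_apply (measurable_pi_lambda _ hmeas) hD]

theorem measure_biInter_preimage_eq_pow (hindep : iIndepFun X P)
    (hmeas : ∀ i, Measurable (X i)) (hid : ∀ i, P.map (X i) = P.map (X 0)) {s : Set β}
    (hs : MeasurableSet s) (n : ℕ) :
    P (⋂ i ∈ Finset.range n, X i ⁻¹' s) = P (X 0 ⁻¹' s) ^ n := by
  rw [hindep.measure_inter_preimage_eq_mul _ fun _ _ => hs,
    Finset.prod_congr rfl fun i _ => by
      rw [← Measure.map_apply (hmeas i) hs, hid, Measure.map_apply (hmeas 0) hs],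
    Finset.prod_const, Finset.card_range]

end iIndepFun

theorem ae_eq_zero_or_exists_measure_Ici_ne_zero {Y : Ω → ℝ} (hint : Integrable Y P)
    (hmean : ∫ ω, Y ω ∂P = 0) : (∀ᵐ ω ∂P, Y ω = 0) ∨ ∃ δ > 0, P (Y ⁻¹' Ici δ) ≠ 0 := by
  refine or_iff_not_imp_right.2 fun h => ?_
  push Not at h
  have hpos : P {ω | 0 < Y ω} = 0 := by
    have hcover : {ω | 0 < Y ω} = ⋃ m : ℕ, Y ⁻¹' Ici (1 / ((m : ℝ) + 1)) := by
      ext ω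
      simp only [mem_ofPred_eq, mem_iUnion, mem_preimage, mem_Ici]
      refine ⟨fun hω => ?_, fun ⟨m, hm⟩ => lt_of_lt_of_le Nat.one_div_pos_of_nat hm⟩
      obtain ⟨m, hm⟩ := exists_nat_one_div_lt hω
      exact ⟨m, hm.le⟩
    rw [hcover]
    exact measure_iUnion_null fun m => h _ Nat.one_div_pos_of_nat
  have hnonneg : ∀ᵐ ω ∂P, 0 ≤ -Y ω :=
    ae_iff.2 (by simpa only [neg_nonneg, not_le] using hpos)
  have hzero := (integral_eq_zero_iff_of_nonneg_ae hnonneg hint.neg).1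
    (by rw [integral_neg, hmean, neg_zero])
  exact hzero.mono fun ω hω => neg_eq_zero.1 hω

end ProbabilityTheory

theorem Set.measurableSet_setOf_ncard_eq {α : Type*} {mα : MeasurableSpace α}
    {p : ℕ → α → Prop} {t : ℕ} (hp : ∀ s ≤ t, MeasurableSet {a | p s a}) (k : ℕ) :
    MeasurableSet {a | Set.ncard {s | 1 ≤ s ∧ s ≤ t ∧ p s a} = k} := by
  classical
  have hcard : ∀ a, Set.ncard {s | 1 ≤ s ∧ s ≤ t ∧ p s a} =
      ∑ s ∈ Finset.Icc 1 t, {a | p s a}.indicator 1 a := by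
    intro a
    simp only [Set.indicator_apply, Set.mem_ofPred_eq, Pi.one_apply]
    rw [← Finset.card_filter, ← Set.ncard_coe_finset]
    congr 1
    ext s
    simp [and_assoc]
  simp only [hcard]
  refine measurableSet_eq_fun (Finset.measurable_sum _ fun s hs => ?_) measurable_const
  exact measurable_one.indicator (hp s (Finset.mem_Icc.1 hs).2)

namespace RandomWalk

def survivalSet (c : ℝ) (n : ℕ) : Set (ℕ → ℝ) :=
  {y | ∀ j ≤ n, 0 ≤ c + ∑ i ∈ Finset.range j, y i}

theorem measurableSet_survivalSet (c : ℝ) (n : ℕ) : MeasurableSet (survivalSet c n) := by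
  simp only [survivalSet, ofPred_forall]
  exact MeasurableSet.iInter fun j => MeasurableSet.iInter fun _ =>
    measurableSet_le measurable_const
      (measurable_const.add (Finset.measurable_sum _ fun i _ => measurable_pi_apply i))

section Events

variable {Ω : Type*} (S : ℕ → Ω → ℝ)

/-- The event `{T_{k+1} = t, H_{k+1} ≤ x}` of the ladder process of `-S`. -/
def ladderEvent (x : ℝ) (k t : ℕ) : Set Ω :=
  {ω | (1 ≤ t ∧ ∀ i < t, S t ω < S i ω) ∧
    Set.ncard {s : ℕ | 1 ≤ s ∧ s ≤ t ∧ ∀ i < s, S s ω < S i ω} = k + 1 ∧ -(S t ω) ≤ x}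

def staysAboveFrom (t n : ℕ) : Set Ω := {ω | ∀ j ≤ n, S t ω ≤ S (t + j) ω}

variable {S}

theorem le_of_mem_staysAboveFrom {t n j : ℕ} {ω : Ω} (h : ω ∈ staysAboveFrom S t n)
    (htj : t ≤ j) (hjn : j ≤ t + n) : S t ω ≤ S j ω := by
  simpa only [Nat.add_sub_cancel' htj] using h (j - t) (by omega)

theorem pairwiseDisjoint_ladderEvent_inter_staysAboveFrom (x : ℝ) (n : ℕ) :
    {p : ℕ × ℕ | p.2 ≤ n}.PairwiseDisjoint
      fun p => ladderEvent S x p.1 p.2 ∩ staysAboveFrom S p.2 n := by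
  have key : ∀ k t k' t', t' ≤ n → t < t' →
      Disjoint (ladderEvent S x k t ∩ staysAboveFrom S t n)
        (ladderEvent S x k' t' ∩ staysAboveFrom S t' n) := by
    intro k t k' t' ht' htt'
    refine Set.disjoint_left.2 fun ω hω hω' => ?_
    -- the later ladder time `t'` lies below `S t`, within `n` steps after `t`
    linarith [le_of_mem_staysAboveFrom hω.2 htt'.le (by omega), hω'.1.1.2 t htt']
  rintro ⟨k, t⟩ (ht : t ≤ n) ⟨k', t'⟩ (ht' : t' ≤ n) hne
  rcases lt_trichotomy t t' with h | rfl | h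
  · exact key k t k' t' ht' h
  · refine Set.disjoint_left.2 fun ω ⟨⟨_, hk, _⟩, _⟩ ⟨⟨_, hk', _⟩, _⟩ => hne ?_
    simp only at hk hk'
    rw [Nat.add_right_cancel (hk.symm.trans hk')]
  · exact (key k' t' k t ht h).symm

theorem disjoint_survival_ladderEvent {x : ℝ} {k t n : ℕ} (hS0 : ∀ ω, S 0 ω = 0) (ht : t ≤ n) :
    Disjoint {ω | ∀ j ≤ n, 0 ≤ S j ω} (ladderEvent S x k t) :=
  Set.disjoint_left.2 fun ω hω hω' => by
    linarith [hω t ht, hω'.1.2 0 hω'.1.1, hS0 ω]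

theorem ladderEvent_inter_staysAboveFrom_subset (x : ℝ) (k t n : ℕ) :
    ladderEvent S x k t ∩ staysAboveFrom S t n ⊆ {ω | ∀ j ≤ n, 0 ≤ x + S j ω} := by
  rintro ω ⟨⟨⟨-, hlad⟩, -, hheight⟩, hstay⟩ j hj
  rcases lt_or_ge j t with hjt | htj
  · linarith [hlad j hjt]
  · linarith [le_of_mem_staysAboveFrom hstay htj (by omega)]

end Events

section Walk

variable {Ω : Type*} {X S : ℕ → Ω → ℝ}

theorem mul_le_walk (hS : ∀ n ω, S n ω = ∑ i ∈ Finset.range n, X i ω) {δ : ℝ} {N j : ℕ}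
    {ω : Ω} (hX : ∀ i < N, δ ≤ X i ω) (hj : j ≤ N) : j * δ ≤ S j ω := by
  rw [hS]
  simpa using Finset.card_nsmul_le_sum _ _ δ fun i hi =>
    hX i ((Finset.mem_range.1 hi).trans_le hj)

theorem preimage_survivalSet (hS : ∀ n ω, S n ω = ∑ i ∈ Finset.range n, X i ω)
    (c : ℝ) (n : ℕ) : (fun ω j => X j ω) ⁻¹' survivalSet c n = {ω | ∀ j ≤ n, 0 ≤ c + S j ω} := by
  simp only [survivalSet, preimage_ofPred_eq, hS]

theorem preimage_shift_survivalSet (hS : ∀ n ω, S n ω = ∑ i ∈ Finset.range n, X i ω)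
    (c : ℝ) (t n : ℕ) :
    (fun ω j => X (t + j) ω) ⁻¹' survivalSet c n = {ω | ∀ j ≤ n, S t ω ≤ c + S (t + j) ω} := by
  ext ω
  simp only [survivalSet, preimage_ofPred_eq, mem_ofPred_eq, hS, Finset.sum_range_add]
  refine forall₂_congr fun j _ => ?_
  constructor <;> intro h <;> linarith

theorem preimage_shift_survivalSet_zero (hS : ∀ n ω, S n ω = ∑ i ∈ Finset.range n, X i ω)
    (t n : ℕ) : (fun ω j => X (t + j) ω) ⁻¹' survivalSet 0 n = staysAboveFrom S t n := by
  simp only [preimage_shift_survivalSet hS, zero_add, staysAboveFrom]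

theorem biInter_preimage_Ici_zero_subset (hS : ∀ n ω, S n ω = ∑ i ∈ Finset.range n, X i ω)
    (n : ℕ) : ⋂ i ∈ Finset.range n, X i ⁻¹' Ici 0 ⊆ {ω | ∀ j ≤ n, 0 ≤ S j ω} := by
  intro ω hω j hj
  simp only [mem_iInter, Finset.mem_range, mem_preimage, mem_Ici] at hω
  simpa using mul_le_walk hS hω hj

theorem measurable_walk_past (hS : ∀ n ω, S n ω = ∑ i ∈ Finset.range n, X i ω) {s t : ℕ}
    (hst : s ≤ t) : Measurable[past X t] (S s) := by
  simp only [funext (hS s)]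
  exact Finset.measurable_sum _ fun i hi =>
    measurable_past ((Finset.mem_range.1 hi).trans_le hst)

theorem measurableSet_ladderEvent_past (hS : ∀ n ω, S n ω = ∑ i ∈ Finset.range n, X i ω)
    (x : ℝ) (k t : ℕ) : MeasurableSet[past X t] (ladderEvent S x k t) := by
  have hlad : ∀ s ≤ t, MeasurableSet[past X t] {ω | ∀ i < s, S s ω < S i ω} := by
    intro s hs
    simp only [ofPred_forall]
    exact MeasurableSet.iInter fun i => MeasurableSet.iInter fun hi => measurableSet_lt
      (measurable_walk_past hS hs) (measurable_walk_past hS (by omega))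
  simp only [ladderEvent, ofPred_and]
  exact ((MeasurableSet.const _).inter (hlad t le_rfl)).inter
    ((measurableSet_setOf_ncard_eq hlad _).inter
      (measurableSet_le (measurable_walk_past hS le_rfl).neg measurable_const))

end Walk

section Measure

variable {Ω : Type*} [MeasurableSpace Ω] {P : Measure Ω} [IsProbabilityMeasure P]
  {X S : ℕ → Ω → ℝ}

theorem measure_survival_ne_zero (hindep : iIndepFun X P) (hmeas : ∀ i, Measurable (X i))
    (hid : ∀ i, P.map (X i) = P.map (X 0)) (hint : Integrable (X 0) P)
    (hmean : ∫ ω, X 0 ω ∂P = 0) (hS : ∀ n ω, S n ω = ∑ i ∈ Finset.range n, X i ω) (n : ℕ) :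
    P {ω | ∀ j ≤ n, 0 ≤ S j ω} ≠ 0 := by
  have hpos : P (X 0 ⁻¹' Ici 0) ≠ 0 := by
    rcases ae_eq_zero_or_exists_measure_Ici_ne_zero hint hmean with h | ⟨δ, hδ, h⟩
    · intro h0
      obtain ⟨ω, hω, hω0⟩ := ((measure_eq_zero_iff_ae_notMem.1 h0).and h).exists
      exact hω (by simp [hω0])
    · exact fun h0 => h (measure_mono_null (fun ω hω => le_trans hδ.le hω) h0)
  refine fun h0 => pow_ne_zero n hpos ?_
  rw [← hindep.measure_biInter_preimage_eq_pow hmeas hid measurableSet_Ici]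
  exact measure_mono_null (biInter_preimage_Ici_zero_subset hS n) h0

theorem measure_ladderEvent_inter_staysAboveFrom (hindep : iIndepFun X P)
    (hmeas : ∀ i, Measurable (X i)) (hid : ∀ i, P.map (X i) = P.map (X 0))
    (hS : ∀ n ω, S n ω = ∑ i ∈ Finset.range n, X i ω) (x : ℝ) (k t n : ℕ) :
    P (ladderEvent S x k t ∩ staysAboveFrom S t n) =
      P (ladderEvent S x k t) * P {ω | ∀ j ≤ n, 0 ≤ S j ω} := by
  rw [← preimage_shift_survivalSet_zero hS, hindep.measure_inter_shift_preimage hmeas hid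
    (measurableSet_ladderEvent_past hS x k t) (measurableSet_survivalSet 0 n),
    preimage_survivalSet hS]
  simp only [zero_add]

theorem measure_survival_mul_one_add_sum_le (hindep : iIndepFun X P)
    (hmeas : ∀ i, Measurable (X i)) (hid : ∀ i, P.map (X i) = P.map (X 0))
    (hS : ∀ n ω, S n ω = ∑ i ∈ Finset.range n, X i ω) {x : ℝ} (hx : 0 ≤ x) (K n : ℕ) :
    P {ω | ∀ j ≤ n, 0 ≤ S j ω} *
        (1 + ∑ k ∈ Finset.range K, P (accumulate (ladderEvent S x k) n)) ≤
      P {ω | ∀ j ≤ n, 0 ≤ x + S j ω} := by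
  set G : ℕ × ℕ → Set Ω := fun p => ladderEvent S x p.1 p.2 ∩ staysAboveFrom S p.2 n
  set F := Finset.range K ×ˢ Finset.Iic n
  have hG : ∀ p, MeasurableSet (G p) := fun p =>
    (past_le hmeas _ _ (measurableSet_ladderEvent_past hS x p.1 p.2)).inter
      (preimage_shift_survivalSet_zero hS p.2 n ▸
        (measurable_pi_lambda _ fun j => hmeas _) (measurableSet_survivalSet 0 n))
  have hDen : MeasurableSet {ω | ∀ j ≤ n, 0 ≤ S j ω} := by
    simpa only [preimage_survivalSet hS, zero_add] using
      measurable_pi_lambda _ hmeas (measurableSet_survivalSet 0 n)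
  have hdisj : Disjoint {ω | ∀ j ≤ n, 0 ≤ S j ω} (⋃ p ∈ F, G p) :=
    Set.disjoint_iUnion₂_right.2 fun p hp => (disjoint_survival_ladderEvent (by simp [hS])
      (Finset.mem_Iic.1 (Finset.mem_product.1 hp).2)).mono_right inter_subset_left
  calc _ ≤ P {ω | ∀ j ≤ n, 0 ≤ S j ω} *
        (1 + ∑ k ∈ Finset.range K, ∑ t ∈ Finset.Iic n, P (ladderEvent S x k t)) := by
        gcongr with k
        simpa only [accumulate_def, Finset.mem_Iic] using
          measure_biUnion_finset_le (Finset.Iic n) (ladderEvent S x k)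
    _ = P {ω | ∀ j ≤ n, 0 ≤ S j ω} + ∑ p ∈ F, P (G p) := by
        rw [Finset.sum_product, mul_add, mul_one, Finset.mul_sum]
        congr 1
        refine Finset.sum_congr rfl fun k _ => ?_
        rw [Finset.mul_sum]
        refine Finset.sum_congr rfl fun t _ => ?_
        rw [measure_ladderEvent_inter_staysAboveFrom hindep hmeas hid hS, mul_comm]
    _ = P ({ω | ∀ j ≤ n, 0 ≤ S j ω} ∪ ⋃ p ∈ F, G p) := by
        rw [measure_union' hdisj hDen, measure_biUnion_finset
          ((pairwiseDisjoint_ladderEvent_inter_staysAboveFrom x n).subset fun p hp =>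
            Finset.mem_Iic.1 (Finset.mem_product.1 hp).2) fun p _ => hG p]
    _ ≤ _ := measure_mono <| union_subset
        (fun ω hω j hj => le_add_of_nonneg_of_le hx (hω j hj))
        (iUnion₂_subset fun p _ => ladderEvent_inter_staysAboveFrom_subset x p.1 p.2 n)

theorem exists_mul_measure_survival_le (hindep : iIndepFun X P)
    (hmeas : ∀ i, Measurable (X i)) (hid : ∀ i, P.map (X i) = P.map (X 0))
    (hint : Integrable (X 0) P) (hmean : ∫ ω, X 0 ω ∂P = 0)
    (hS : ∀ n ω, S n ω = ∑ i ∈ Finset.range n, X i ω) (x : ℝ) :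
    ∃ c : ℝ≥0∞, c ≠ 0 ∧ c ≠ ∞ ∧
      ∀ n, c * P {ω | ∀ j ≤ n, 0 ≤ x + S j ω} ≤ P {ω | ∀ j ≤ n, 0 ≤ S j ω} := by
  rcases ae_eq_zero_or_exists_measure_Ici_ne_zero hint hmean with h | ⟨δ, hδ, hδP⟩
  · refine ⟨1, one_ne_zero, one_ne_top, fun n => ?_⟩
    have hone : P (X 0 ⁻¹' Ici 0) = 1 :=
      (prob_compl_eq_zero_iff (hmeas 0 measurableSet_Ici)).1
        (ae_iff.1 (h.mono fun ω hω => (hω ▸ le_rfl : (0 : ℝ) ≤ X 0 ω)))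
    calc _ ≤ 1 := by rw [one_mul]; exact prob_le_one
      _ = P (⋂ i ∈ Finset.range n, X i ⁻¹' Ici 0) := by
        rw [hindep.measure_biInter_preimage_eq_pow hmeas hid measurableSet_Ici, hone, one_pow]
      _ ≤ _ := measure_mono (biInter_preimage_Ici_zero_subset hS n)
  -- `N` steps of size at least `δ` lift the walk above `x` without leaving `[0, ∞)`
  set N := ⌈x / δ⌉₊
  have hxN : x ≤ N * δ := (div_le_iff₀ hδ).1 (Nat.le_ceil _)
  set C := ⋂ i ∈ Finset.range N, X i ⁻¹' Ici δ
  refine ⟨P C, ?_, measure_ne_top P C, fun n => ?_⟩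
  · rw [hindep.measure_biInter_preimage_eq_pow hmeas hid measurableSet_Ici]
    exact pow_ne_zero N hδP
  have hC : MeasurableSet[past X N] C := Finset.measurableSet_biInter _ fun i hi =>
    measurable_past (Finset.mem_range.1 hi) measurableSet_Ici
  have hsub : C ∩ (fun ω j => X (N + j) ω) ⁻¹' survivalSet x n ⊆
      {ω | ∀ j ≤ n, 0 ≤ S j ω} := by
    rw [preimage_shift_survivalSet hS]
    rintro ω ⟨hω, hstay⟩ j hj
    simp only [C, mem_iInter, Finset.mem_range, mem_preimage, mem_Ici] at hω
    rcases le_or_gt j N with hjN | hNj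
    · exact le_trans (by positivity) (mul_le_walk hS hω hjN)
    · have := hstay (j - N) (by omega)
      rw [Nat.add_sub_cancel' hNj.le] at this
      linarith [mul_le_walk hS hω le_rfl]
  calc _ = P (C ∩ (fun ω j => X (N + j) ω) ⁻¹' survivalSet x n) := by
        rw [hindep.measure_inter_shift_preimage hmeas hid hC (measurableSet_survivalSet x n),
          preimage_survivalSet hS]
    _ ≤ _ := measure_mono hsub

theorem isCoboundedUnder_ge_ratio (hindep : iIndepFun X P)
    (hmeas : ∀ i, Measurable (X i)) (hid : ∀ i, P.map (X i) = P.map (X 0))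
    (hint : Integrable (X 0) P) (hmean : ∫ ω, X 0 ω ∂P = 0)
    (hS : ∀ n ω, S n ω = ∑ i ∈ Finset.range n, X i ω) (x : ℝ) :
    IsCoboundedUnder (· ≥ ·) atTop fun n : ℕ =>
      (P {ω | ∀ j ≤ n, 0 ≤ x + S j ω}).toReal / (P {ω | ∀ j ≤ n, 0 ≤ S j ω}).toReal := by
  obtain ⟨c, hc0, hctop, hc⟩ :=
    exists_mul_measure_survival_le hindep hmeas hid hint hmean hS x
  refine isCoboundedUnder_ge_of_le atTop (x := c.toReal⁻¹) fun n => ?_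
  have hcpos : 0 < c.toReal := toReal_pos hc0 hctop
  refine div_le_of_le_mul₀ toReal_nonneg (inv_nonneg.2 hcpos.le) ?_
  rw [inv_mul_eq_div, le_div_iff₀ hcpos, mul_comm, ← toReal_mul]
  exact toReal_mono (measure_ne_top _ _) (hc n)

theorem one_add_sum_le_ratio (hindep : iIndepFun X P) (hmeas : ∀ i, Measurable (X i))
    (hid : ∀ i, P.map (X i) = P.map (X 0)) (hint : Integrable (X 0) P)
    (hmean : ∫ ω, X 0 ω ∂P = 0) (hS : ∀ n ω, S n ω = ∑ i ∈ Finset.range n, X i ω) {x : ℝ}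
    (hx : 0 ≤ x) (K n : ℕ) :
    1 + ∑ k ∈ Finset.range K, (P (accumulate (ladderEvent S x k) n)).toReal ≤
      (P {ω | ∀ j ≤ n, 0 ≤ x + S j ω}).toReal / (P {ω | ∀ j ≤ n, 0 ≤ S j ω}).toReal := by
  rw [le_div_iff₀ (toReal_pos (measure_survival_ne_zero hindep hmeas hid hint hmean hS n)
    (measure_ne_top _ _)), mul_comm]
  have := toReal_mono (measure_ne_top _ _)
    (measure_survival_mul_one_add_sum_le hindep hmeas hid hS hx K n)
  rwa [toReal_mul, toReal_add one_ne_top (sum_ne_top.2 fun _ _ => measure_ne_top _ _),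
    toReal_one, toReal_sum fun _ _ => measure_ne_top _ _] at this

theorem one_add_sum_le_liminf_ratio (hindep : iIndepFun X P)
    (hmeas : ∀ i, Measurable (X i)) (hid : ∀ i, P.map (X i) = P.map (X 0))
    (hint : Integrable (X 0) P) (hmean : ∫ ω, X 0 ω ∂P = 0)
    (hS : ∀ n ω, S n ω = ∑ i ∈ Finset.range n, X i ω) {x : ℝ}
    (hx : 0 ≤ x) (K : ℕ) :
    1 + ∑ k ∈ Finset.range K, (P (⋃ t, ladderEvent S x k t)).toReal ≤
      liminf (fun n : ℕ => (P {ω | ∀ j ≤ n, 0 ≤ x + S j ω}).toReal /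
        (P {ω | ∀ j ≤ n, 0 ≤ S j ω}).toReal) atTop := by
  have hlim : Tendsto (fun n => 1 + ∑ k ∈ Finset.range K,
      (P (accumulate (ladderEvent S x k) n)).toReal) atTop
      (𝓝 (1 + ∑ k ∈ Finset.range K, (P (⋃ t, ladderEvent S x k t)).toReal)) :=
    tendsto_const_nhds.add <| tendsto_finsetSum _ fun k _ =>
      (ENNReal.tendsto_toReal (measure_ne_top _ _)).comp tendsto_measure_iUnion_accumulate
  rw [← hlim.liminf_eq]
  exact liminf_le_liminf (Eventually.of_forall
    (one_add_sum_le_ratio hindep hmeas hid hint hmean hS hx K)) hlim.isBoundedUnder_ge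
    (isCoboundedUnder_ge_ratio hindep hmeas hid hint hmean hS x)

end Measure

end RandomWalk

open RandomWalk in
/-- Lemma on the ratio of survival probabilities: for a centered random walk `S`, with
`τ = min {k ≥ 1 : S k < 0}` and `V` the renewal function of the strict ascending ladder
heights `H_k` of `-S`, one has `liminf_n P_x(τ > n) / P_0(τ > n) ≥ V x` for all `x ≥ 0`.
Here `t` is a strict ascending ladder time of `-S` iff `t ≥ 1` and `S t < S i` for all
`i < t`; the event `{H_k ≤ x}` (with `T_k < ∞`) is that there is a ladder time `t` which is
the `k`-th one and `-S t ≤ x`; and `V x = ∑_{k≥0} P(H_k ≤ x) = 1 + ∑_{k≥1} P(H_k ≤ x)`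
since `H_0 = 0 ≤ x`. `P_x(τ > n)` is the probability that the walk started from `x`
stays nonnegative up to time `n`. -/
theorem liminf_ratio_ge_renewal_function
    {Ω : Type*} [MeasurableSpace Ω] (P : Measure Ω) [IsProbabilityMeasure P]
    (X : ℕ → Ω → ℝ) (hmeas : ∀ i, Measurable (X i))
    (hindep : iIndepFun X P)
    (hid : ∀ i, Measure.map (X i) P = Measure.map (X 0) P)
    (hint : Integrable (X 0) P) (hmean : ∫ ω, X 0 ω ∂P = 0)
    (S : ℕ → Ω → ℝ) (hS : ∀ n ω, S n ω = ∑ i ∈ Finset.range n, X i ω)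
    (V : ℝ → ℝ)
    (hV : ∀ x, V x = 1 + ∑' k : ℕ,
      (P {ω | ∃ t : ℕ, (1 ≤ t ∧ ∀ i < t, S t ω < S i ω) ∧
          Set.ncard {s : ℕ | 1 ≤ s ∧ s ≤ t ∧ ∀ i < s, S s ω < S i ω} = k + 1 ∧
          -(S t ω) ≤ x}).toReal)
    (x : ℝ) (hx : 0 ≤ x) :
    V x ≤ liminf (fun n : ℕ =>
        (P {ω | ∀ k ≤ n, 0 ≤ x + S k ω}).toReal / (P {ω | ∀ k ≤ n, 0 ≤ S k ω}).toReal)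
      atTop := by
  simp only [ofPred_exists] at hV
  rw [hV x, ← le_sub_iff_add_le']
  exact Real.tsum_le_of_sum_range_le (fun _ => toReal_nonneg) fun K => le_sub_iff_add_le'.2
    (one_add_sum_le_liminf_ratio hindep hmeas hid hint hmean hS hx K)
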